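/- arXiv:1612.02301 — 2 statements merged into one kernel-verified Lean document; each statement's English description precedes it below -/
import Mathlib

section
/- For every real number a ≠ 0, every ε > 0, and every p with 1 < p ≤ 2, one has 0 ≤ |a|^(p-2) - (a^2 + ε^2)^((p-2)/2) ≤ ((2-p)/2) · ε^2 · |a|^(p-4). -/
theorem stmt_0 (a : ℝ) (ha : a ≠ 0) (ε : ℝ) (hε : 0 < ε) (p : ℝ) (hp1 : 1 < p) (hp2 : p ≤ 2) :
    0 ≤ |a| ^ (p - 2) - (a ^ 2 + ε ^ 2) ^ ((p - 2) / 2) ∧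
    |a| ^ (p - 2) - (a ^ 2 + ε ^ 2) ^ ((p - 2) / 2) ≤ (2 - p) / 2 * ε ^ 2 * |a| ^ (p - 4) := by
  have hx : (0:ℝ) < a ^ 2 := by positivity
  have hε2 : (0:ℝ) < ε ^ 2 := by positivity
  set q : ℝ := (p - 2) / 2 with hq
  have hq0 : q ≤ 0 := by rw [hq]; linarith
  have hq1 : -q ≤ 1 := by rw [hq]; linarith
  have h1 : |a| ^ (p - 2) = (a ^ 2) ^ q := by
    rw [← sq_abs, ← Real.rpow_natCast |a| 2, ← Real.rpow_mul (abs_nonneg a)]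
    congr 1; rw [hq]; push_cast; ring
  have h2 : |a| ^ (p - 4) = (a ^ 2) ^ (q - 1) := by
    rw [← sq_abs, ← Real.rpow_natCast |a| 2, ← Real.rpow_mul (abs_nonneg a)]
    rw [hq]; ring_nf
  constructor
  · have := Real.rpow_le_rpow_of_nonpos hx (by linarith : a ^ 2 ≤ a ^ 2 + ε ^ 2) hq0
    rw [h1]; linarith
  · set s : ℝ := ε ^ 2 / a ^ 2 with hs
    have hs0 : 0 < s := by positivity
    have hber : (1 + s) ^ (-q) ≤ 1 + (-q) * s :=
      rpow_one_add_le_one_add_mul_self (by linarith) (by linarith) hq1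
    have hpos : (0:ℝ) < (1 + s) ^ q := Real.rpow_pos_of_pos (by linarith) _
    have hkey : 1 + q * s ≤ (1 + s) ^ q := by
      rcases le_or_gt (1 + q * s) 0 with h | h
      · linarith
      · have hinv : (1 + s) ^ (-q) * (1 + s) ^ q = 1 := by
          rw [← Real.rpow_add (by linarith)]; simp
        nlinarith [Real.rpow_pos_of_pos (show (0:ℝ) < 1 + s by linarith) (-q),
          sq_nonneg (q * s), mul_le_mul_of_nonneg_right hber h.le]
    -- (a^2 + ε^2)^q = (a^2)^q * (1+s)^q
    have hsplit : (a ^ 2 + ε ^ 2) ^ q = (a ^ 2) ^ q * (1 + s) ^ q := by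
      rw [← Real.mul_rpow hx.le (by linarith)]
      congr 1
      rw [hs]
      field_simp
    have hxq : (0:ℝ) < (a ^ 2) ^ q := Real.rpow_pos_of_pos hx _
    have hxq1 : (a ^ 2) ^ (q - 1) = (a ^ 2) ^ q / a ^ 2 := by
      rw [Real.rpow_sub hx, Real.rpow_one]
    rw [h1, h2, hsplit, hxq1]
    have : (a ^ 2) ^ q * (1 + q * s) ≤ (a ^ 2) ^ q * (1 + s) ^ q :=
      mul_le_mul_of_nonneg_left hkey hxq.le
    have hqs : (a ^ 2) ^ q * (q * s) = q * ε ^ 2 * ((a ^ 2) ^ q / a ^ 2) := by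
      rw [hs]; field_simp
    have hgoal : (2 - p) / 2 = -q := by rw [hq]; ring
    rw [hgoal]
    nlinarith [this, hqs]
end

section
/- For all vectors a, b in ℝⁿ and all p with 1 < p ≤ 2, one has ⟨|b|^(p-2) b - |a|^(p-2) a, b - a⟩ ≥ (p-1) |b-a|² (1 + |a|² + |b|²)^((p-2)/2), where the terms |a|^(p-2) a and |b|^(p-2) b are interpreted as 0 when a = 0 or b = 0 respectively. -/
open scoped RealInnerProductSpace

private lemma mul_rpow_self {A : ℝ} (hA : 0 ≤ A) {q : ℝ} (hq : q ≠ 0) :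
    A * A ^ (q - 1) = A ^ q := by
  rcases eq_or_lt_of_le hA with h | h
  · simp [← h, Real.zero_rpow hq]
  · nth_rewrite 1 [← Real.rpow_one A]
    rw [← Real.rpow_add h]
    ring_nf

/-- Bernoulli-type inequality: for `0 < q ≤ 1` and `0 ≤ B ≤ A`,
`q * (A - B) * A ^ (q - 1) ≤ A ^ q - B ^ q`. -/
private lemma bernoulli_aux {q A B : ℝ} (hq0 : 0 < q) (hq1 : q ≤ 1)
    (hB : 0 ≤ B) (hBA : B ≤ A) :
    q * (A - B) * A ^ (q - 1) ≤ A ^ q - B ^ q := by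
  have hA : 0 ≤ A := hB.trans hBA
  rcases eq_or_lt_of_le hA with h | hApos
  · have hB0 : B = 0 := le_antisymm (hBA.trans h.symm.le) hB
    simp [← h, hB0, Real.zero_rpow (ne_of_gt hq0)]
  · have h1 : (A ^ (q - 1) * B) ^ q * (A ^ q) ^ (1 - q) ≤
        q * (A ^ (q - 1) * B) + (1 - q) * (A ^ q) :=
      Real.geom_mean_le_arith_mean2_weighted hq0.le (by linarith)
        (mul_nonneg (Real.rpow_nonneg hA _) hB) (Real.rpow_nonneg hA _) (by ring)
    have h2 : (A ^ (q - 1) * B) ^ q * (A ^ q) ^ (1 - q) = B ^ q := by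
      rw [Real.mul_rpow (Real.rpow_nonneg hA _) hB, ← Real.rpow_mul hA,
        ← Real.rpow_mul hA, mul_right_comm, ← Real.rpow_add hApos,
        show (q - 1) * q + q * (1 - q) = 0 from by ring, Real.rpow_zero, one_mul]
    rw [h2] at h1
    have h3 : A * A ^ (q - 1) = A ^ q := mul_rpow_self hA (ne_of_gt hq0)
    have h4 : q * (A * A ^ (q - 1)) = q * A ^ q := by rw [h3]
    linarith [h1, h4]

/-- Scalar key lemma. -/
private lemma key_scalar (p : ℝ) (hp1 : 1 < p) (hp2 : p ≤ 2) (A B t : ℝ)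
    (hA : 0 ≤ A) (hB : 0 ≤ B) (ht : |t| ≤ A * B) :
    (p - 1) * (A ^ 2 + B ^ 2 - 2 * t) * (1 + A ^ 2 + B ^ 2) ^ ((p - 2) / 2) ≤
      A ^ (p - 2) * (A ^ 2 - t) + B ^ (p - 2) * (B ^ 2 - t) := by
  set X : ℝ := 1 + A ^ 2 + B ^ 2 with hX
  have hXpos : (0 : ℝ) < X := by positivity
  set M : ℝ := X ^ ((1 : ℝ) / 2) with hM
  have hMpos : 0 < M := Real.rpow_pos_of_pos hXpos _
  set C : ℝ := X ^ ((p - 2) / 2) with hC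
  have hCM : C = M ^ (p - 2) := by
    rw [hC, hM, ← Real.rpow_mul hXpos.le]
    congr 1
    ring
  have hCpos : 0 < C := Real.rpow_pos_of_pos hXpos _
  have hle : ∀ s : ℝ, 0 < s → s ≤ M → C ≤ s ^ (p - 2) := by
    intro s hs hsM
    rw [hCM]
    exact Real.rpow_le_rpow_of_nonpos hs hsM (by linarith)
  have hM2 : M ^ 2 = X := by
    rw [hM, ← Real.rpow_natCast (X ^ ((1 : ℝ) / 2)) 2, ← Real.rpow_mul hXpos.le]
    norm_num
  have hAM : A ≤ M := by nlinarith
  have hBM : B ≤ M := by nlinarith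
  have hCs : ∀ s : ℝ, 0 ≤ s → s ≤ M → C * s ≤ s ^ (p - 1) := by
    intro s hs hsM
    rcases eq_or_lt_of_le hs with h | h
    · rw [← h, mul_zero, Real.zero_rpow (by linarith)]
    · have h1 := hle s h hsM
      have h2 : s * s ^ (p - 2) = s ^ (p - 1) := by
        have h' := mul_rpow_self (A := s) hs (q := p - 1) (by intro hh; linarith)
        rwa [show p - 1 - 1 = p - 2 from by ring] at h'
      have h3 := mul_le_mul_of_nonneg_left h1 h.le
      linarith [h2, h3]
  have hrA : A * A ^ (p - 2) = A ^ (p - 1) := by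
    have h' := mul_rpow_self (A := A) hA (q := p - 1) (by intro hh; linarith)
    rwa [show p - 1 - 1 = p - 2 from by ring] at h'
  have hrB : B * B ^ (p - 2) = B ^ (p - 1) := by
    have h' := mul_rpow_self (A := B) hB (q := p - 1) (by intro hh; linarith)
    rwa [show p - 1 - 1 = p - 2 from by ring] at h'
  -- endpoint t = -A*B
  have Eminus : (p - 1) * (A + B) ^ 2 * C ≤
      A ^ (p - 2) * (A ^ 2 + A * B) + B ^ (p - 2) * (B ^ 2 + A * B) := by
    have e1 : A ^ (p - 2) * (A ^ 2 + A * B) = (A + B) * A ^ (p - 1) := by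
      rw [← hrA]; ring
    have e2 : B ^ (p - 2) * (B ^ 2 + A * B) = (A + B) * B ^ (p - 1) := by
      rw [← hrB]; ring
    rw [e1, e2]
    have hCA := mul_le_mul_of_nonneg_left (hCs A hA hAM) (by linarith : (0:ℝ) ≤ A + B)
    have hCB := mul_le_mul_of_nonneg_left (hCs B hB hBM) (by linarith : (0:ℝ) ≤ A + B)
    have h5 : (0:ℝ) ≤ (2 - p) * (C * (A + B) ^ 2) :=
      mul_nonneg (by linarith) (by positivity)
    linarith [hCA, hCB, h5]
  -- endpoint t = A*B : symmetric helper
  have Ehelp : ∀ A' B' : ℝ, 0 ≤ B' → B' ≤ A' → A' ≤ M →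
      (p - 1) * (A' - B') ^ 2 * C ≤
        A' ^ (p - 2) * (A' ^ 2 - A' * B') + B' ^ (p - 2) * (B' ^ 2 - A' * B') := by
    intro A' B' hB' hBA' hAM'
    have hA' : 0 ≤ A' := hB'.trans hBA'
    have hbern := bernoulli_aux (q := p - 1) (by linarith) (by linarith) hB' hBA'
    rw [show p - 1 - 1 = p - 2 from by ring] at hbern
    have hrA' : A' * A' ^ (p - 2) = A' ^ (p - 1) := by
      have h' := mul_rpow_self (A := A') hA' (q := p - 1) (by intro hh; linarith)
      rwa [show p - 1 - 1 = p - 2 from by ring] at h'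
    have hrB' : B' * B' ^ (p - 2) = B' ^ (p - 1) := by
      have h' := mul_rpow_self (A := B') hB' (q := p - 1) (by intro hh; linarith)
      rwa [show p - 1 - 1 = p - 2 from by ring] at h'
    have hmul := mul_le_mul_of_nonneg_left hbern (by linarith : (0:ℝ) ≤ A' - B')
    rcases eq_or_lt_of_le hA' with h0 | h0
    · have hB0 : B' = 0 := le_antisymm (hBA'.trans h0.symm.le) hB'
      simp [← h0, hB0]
    · have hCA' : C ≤ A' ^ (p - 2) := hle A' h0 hAM'
      have hstep := mul_le_mul_of_nonneg_left hCA'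
        (mul_nonneg (by linarith) (sq_nonneg (A' - B')) : (0:ℝ) ≤ (p - 1) * (A' - B') ^ 2)
      have e1 : A' ^ (p - 2) * (A' ^ 2 - A' * B') = (A' - B') * A' ^ (p - 1) := by
        rw [← hrA']; ring
      have e2 : B' ^ (p - 2) * (B' ^ 2 - A' * B') = -((A' - B') * B' ^ (p - 1)) := by
        rw [← hrB']; ring
      rw [e1, e2]
      linarith [hmul, hstep]
  have Eplus : (p - 1) * (A - B) ^ 2 * C ≤
      A ^ (p - 2) * (A ^ 2 - A * B) + B ^ (p - 2) * (B ^ 2 - A * B) := by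
    rcases le_total B A with h | h
    · exact Ehelp A B hB h hAM
    · have h' := Ehelp B A hA h hBM
      linarith [h']
  -- combine: both sides are affine in t
  have htk : ∀ k : ℝ, t * k ≤ A * B * |k| := fun k => by
    calc t * k ≤ |t * k| := le_abs_self _
      _ = |t| * |k| := abs_mul t k
      _ ≤ A * B * |k| := mul_le_mul_of_nonneg_right ht (abs_nonneg k)
  have htk := htk (A ^ (p - 2) + B ^ (p - 2) - 2 * (p - 1) * C)
  rcases abs_cases (A ^ (p - 2) + B ^ (p - 2) - 2 * (p - 1) * C) with ⟨hk1, _⟩ | ⟨hk1, _⟩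
  · rw [hk1] at htk
    linarith [Eplus, htk]
  · rw [hk1] at htk
    linarith [Eminus, htk]

theorem stmt_2 (n : ℕ) (a b : EuclideanSpace ℝ (Fin n)) (p : ℝ) (hp1 : 1 < p) (hp2 : p ≤ 2) :
    ⟪(‖b‖ ^ (p - 2)) • b - (‖a‖ ^ (p - 2)) • a, b - a⟫ ≥
      (p - 1) * ‖b - a‖ ^ 2 * (1 + ‖a‖ ^ 2 + ‖b‖ ^ 2) ^ ((p - 2) / 2) := by
  have key := key_scalar p hp1 hp2 ‖a‖ ‖b‖ ⟪a, b⟫ (norm_nonneg a) (norm_nonneg b)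
    (abs_real_inner_le_norm a b)
  have hL : ⟪(‖b‖ ^ (p - 2)) • b - (‖a‖ ^ (p - 2)) • a, b - a⟫ =
      ‖b‖ ^ (p - 2) * (‖b‖ ^ 2 - ⟪a, b⟫) + ‖a‖ ^ (p - 2) * (‖a‖ ^ 2 - ⟪a, b⟫) := by
    simp only [inner_sub_left, inner_sub_right, real_inner_smul_left,
      real_inner_self_eq_norm_sq, real_inner_comm b a]
    ring
  have hN : ‖b - a‖ ^ 2 = ‖b‖ ^ 2 - 2 * ⟪a, b⟫ + ‖a‖ ^ 2 := by
    rw [norm_sub_sq_real, real_inner_comm b a]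
  rw [hL, hN, ge_iff_le]
  calc (p - 1) * (‖b‖ ^ 2 - 2 * ⟪a, b⟫ + ‖a‖ ^ 2) * (1 + ‖a‖ ^ 2 + ‖b‖ ^ 2) ^ ((p - 2) / 2)
      = (p - 1) * (‖a‖ ^ 2 + ‖b‖ ^ 2 - 2 * ⟪a, b⟫) * (1 + ‖a‖ ^ 2 + ‖b‖ ^ 2) ^ ((p - 2) / 2) := by
        ring
    _ ≤ ‖a‖ ^ (p - 2) * (‖a‖ ^ 2 - ⟪a, b⟫) + ‖b‖ ^ (p - 2) * (‖b‖ ^ 2 - ⟪a, b⟫) := key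
    _ = ‖b‖ ^ (p - 2) * (‖b‖ ^ 2 - ⟪a, b⟫) + ‖a‖ ^ (p - 2) * (‖a‖ ^ 2 - ⟪a, b⟫) := by ring
end
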